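/- Fiberwise energy identity for the SAFT Zak transform: let f : ℝ → ℂ and t ∈ ℝ be such that Σ_{k∈ℤ} |f(t + k)| < ∞. Then ∫_0^Δ |Z_A f(t, ω)|² dω = Σ_{k∈ℤ} |f(t + k)|². -/

import Mathlib

/-! Pulling the unimodular chirp `exp (i (d ω² + Ω ω) / 2b)` out of the sum leaves, up to the factor
`(2πb)^(-1/2)`, a Fourier series in `ω` of period `Δ = 2πb` whose `(-k)`-th coefficient is `f (t + k)`
times a unimodular chirp in `k`. Since these coefficients are absolutely summable, the series is
a continuous function on the circle `ℝ / Δℤ` whose Fourier coefficients are exactly them, and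
Parseval's identity on `AddCircle Δ` gives the claim. -/

open MeasureTheory Real

/-- The SAFT Zak transform of `f : ℝ → ℂ`, with `Ω = 2*(b*q - d*p)`. -/
noncomputable def saftZak (a b d p q : ℝ) (f : ℝ → ℂ) (t ω : ℝ) : ℂ :=
  (Real.sqrt (2 * π * b) : ℂ)⁻¹ *
    ∑' k : ℤ, f (t + (k : ℝ)) * Complex.exp (Complex.I / (2 * b) *
      ((d * ω ^ 2 + a * (k : ℝ) ^ 2 - 2 * (k : ℝ) * ω + 2 * (b * q - d * p) * ω
        + 2 * p * (k : ℝ) : ℝ) : ℂ))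

open AddCircle

section FourierSeries

variable {T : ℝ} [hT : Fact (0 < T)] {c : ℤ → ℂ}

lemma summable_smul_fourier (hc : Summable fun k ↦ ‖c k‖) :
    Summable fun k ↦ c k • fourier (T := T) k :=
  .of_norm <| by simpa only [norm_smul, fourier_norm, mul_one] using hc

lemma fourierCoeff_tsum_smul_fourier (hc : Summable fun k ↦ ‖c k‖) (n : ℤ) :
    fourierCoeff (⇑(∑' k, c k • fourier (T := T) k)) n = c n := by
  set F : ℤ → AddCircle T → ℂ := fun k x ↦ fourier (-n) x • (c k • fourier k) x
  have hF_norm (k : ℤ) (x : AddCircle T) : ‖F k x‖ = ‖c k‖ := by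
    simp only [F, ContinuousMap.smul_apply, norm_smul, fourier_apply, Circle.norm_coe, one_mul,
      mul_one]
  have hF_int (k : ℤ) : Integrable (F k) haarAddCircle :=
    ((fourier (-n)).continuous.smul (c k • fourier k).continuous).integrable_of_hasCompactSupport
      (.of_compactSpace _)
  have hF_sum : Summable fun k ↦ ∫ x, ‖F k x‖ ∂haarAddCircle := by
    simpa [hF_norm] using hc
  calc fourierCoeff (⇑(∑' k, c k • fourier (T := T) k)) n
      = ∫ x, ∑' k, F k x ∂haarAddCircle := by
        simp only [fourierCoeff, F, ← ContinuousMap.tsum_apply (summable_smul_fourier hc),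
          ← tsum_const_smul'']
    _ = ∑' k, fourierCoeff (⇑(c k • fourier (T := T) k)) n :=
        (integral_tsum_of_summable_integral_norm hF_int hF_sum).symm
    _ = c n := by
        simp [fourierCoeff.const_smul, fourierCoeff_fourier, Pi.single_apply]

lemma intervalIntegral_norm_sq_tsum_mul_fourier (hc : Summable fun k ↦ ‖c k‖) (a : ℝ) :
    ∫ x in a..a + T, ‖∑' k, c k * fourier k (x : AddCircle T)‖ ^ 2 = T * ∑' k, ‖c k‖ ^ 2 := by
  set G : C(AddCircle T, ℂ) := ∑' k, c k • fourier k
  have hG (x : AddCircle T) : G x = ∑' k, c k * fourier k x := by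
    simp only [G, ← ContinuousMap.tsum_apply (summable_smul_fourier hc), ContinuousMap.smul_apply,
      smul_eq_mul]
  have parseval : ∑' k, ‖c k‖ ^ 2 = ∫ x, ‖G x‖ ^ 2 ∂haarAddCircle :=
    calc ∑' k, ‖c k‖ ^ 2
        = ∑' k, ‖fourierCoeff (ContinuousMap.toLp 2 haarAddCircle ℂ G) k‖ ^ 2 := by
          simp only [fourierCoeff_toLp, G, fourierCoeff_tsum_smul_fourier hc]
      _ = ∫ x, ‖ContinuousMap.toLp 2 haarAddCircle ℂ G x‖ ^ 2 ∂haarAddCircle :=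
          tsum_sq_fourierCoeff _
      _ = ∫ x, ‖G x‖ ^ 2 ∂haarAddCircle :=
          integral_congr_ae <| (ContinuousMap.coeFn_toLp (p := 2) (𝕜 := ℂ) _ G).mono
            fun x hx ↦ by simp only [hx]
  rw [integral_haarAddCircle, smul_eq_mul] at parseval
  rw [AddCircle.intervalIntegral_preimage T a fun x ↦ ‖∑' k, c k * fourier k x‖ ^ 2]
  simp only [← hG, parseval]
  field_simp [hT.out.ne']

end FourierSeries

noncomputable def saftZakCoeff (a b p : ℝ) (f : ℝ → ℂ) (t : ℝ) (k : ℤ) : ℂ :=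
  f (t + k) * Complex.exp (((a * k ^ 2 + 2 * p * k) / (2 * b) : ℝ) * Complex.I)

@[simp]
lemma norm_saftZakCoeff (a b p : ℝ) (f : ℝ → ℂ) (t : ℝ) (k : ℤ) :
    ‖saftZakCoeff a b p f t k‖ = ‖f (t + k)‖ := by
  simp only [saftZakCoeff, norm_mul, Complex.norm_exp_ofReal_mul_I, mul_one]

lemma saftZak_eq_mul_tsum_fourier (a b d p q : ℝ) (f : ℝ → ℂ) (t ω : ℝ) :
    saftZak a b d p q f t ω = (√(2 * π * b) : ℂ)⁻¹ *
      (Complex.exp (((d * ω ^ 2 + 2 * (b * q - d * p) * ω) / (2 * b) : ℝ) * Complex.I) *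
        ∑' k : ℤ, saftZakCoeff a b p f t (-k) * fourier k (ω : AddCircle (2 * π * b))) := by
  rw [saftZak]
  congr 1
  rw [← tsum_mul_left, ← (Equiv.neg ℤ).tsum_eq]
  refine tsum_congr fun k ↦ ?_
  simp only [saftZakCoeff, fourier_coe_apply, Equiv.neg_apply, Int.cast_neg]
  rw [mul_left_comm, mul_assoc (f _), ← Complex.exp_add, ← Complex.exp_add]
  congr 2
  push_cast
  field_simp
  ring

lemma norm_sq_saftZak {b : ℝ} (hb : 0 ≤ b) (a d p q : ℝ) (f : ℝ → ℂ) (t ω : ℝ) :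
    ‖saftZak a b d p q f t ω‖ ^ 2 = (2 * π * b)⁻¹ *
      ‖∑' k : ℤ, saftZakCoeff a b p f t (-k) * fourier k (ω : AddCircle (2 * π * b))‖ ^ 2 := by
  rw [saftZak_eq_mul_tsum_fourier, norm_mul, norm_mul, Complex.norm_exp_ofReal_mul_I,
    one_mul, mul_pow, norm_inv, Complex.norm_real, norm_of_nonneg (sqrt_nonneg _), inv_pow,
    sq_sqrt (by positivity)]

theorem saftZak_fiber_energy_general (a b d p q : ℝ) (hb : 0 < b)
    (f : ℝ → ℂ) (t : ℝ) (hf : Summable fun k : ℤ => ‖f (t + (k : ℝ))‖) :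
    (∫ ω in (0:ℝ)..(2 * π * b), ‖saftZak a b d p q f t ω‖ ^ 2) =
      ∑' k : ℤ, ‖f (t + (k : ℝ))‖ ^ 2 := by
  have hT : Fact (0 < 2 * π * b) := ⟨by positivity⟩
  have hc : Summable fun k : ℤ ↦ ‖saftZakCoeff a b p f t (-k)‖ := by
    simpa [Function.comp_def] using hf.comp_injective neg_injective
  have parseval := intervalIntegral_norm_sq_tsum_mul_fourier (T := 2 * π * b) hc 0
  rw [zero_add] at parseval
  simp only [norm_sq_saftZak hb.le, intervalIntegral.integral_const_mul, parseval,
    inv_mul_cancel_left₀ hT.out.ne']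
  simpa using (Equiv.neg ℤ).tsum_eq fun k ↦ ‖saftZakCoeff a b p f t k‖ ^ 2

/-- Fiberwise energy identity for the SAFT Zak transform, with `Δ = 2πb`. -/
theorem saftZak_fiber_energy (a b c d p q : ℝ) (hb : 0 < b) (habcd : a * d - b * c = 1)
    (f : ℝ → ℂ) (t : ℝ) (hf : Summable fun k : ℤ => ‖f (t + (k : ℝ))‖) :
    (∫ ω in (0:ℝ)..(2 * π * b), ‖saftZak a b d p q f t ω‖ ^ 2) =
      ∑' k : ℤ, ‖f (t + (k : ℝ))‖ ^ 2 :=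
  saftZak_fiber_energy_general a b d p q hb f t hf
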